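/- arXiv:1011.2590 — 2 statements merged into one kernel-verified Lean document; each statement's English description precedes it below -/
import Mathlib

section
/- There exist absolute constants υ ≥ 1, CONST ≥ 1 and a positive integer m₀ such that the following holds: for every integer m ≥ m₀, every real F with 1 ≤ F ≤ υ·log(m)/log(log(m)), every positive integer d, and all integers i, t with 1 ≤ i ≤ 2m, i ≤ d, 1 ≤ t ≤ i/2 and t < 0.39·i, one has |W_{[i],t}| ≤ CONST^{2m} · i! · m^{4m+i−5t} · (1/F)^{4m−2i}. -/
open Finset MeasureTheory ProbabilityTheory

noncomputable section

/-- The set of sequences `S = (S_1, …, S_{2m})` of pairs `S_j = (S_{j,1}, S_{j,2})` of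
integers with `1 ≤ S_{j,1} < S_{j,2} ≤ d` (realized as elements of `Fin d`). -/
def Seqs (d m : ℕ) : Set (Fin (2*m) → Fin d × Fin d) :=
  {S | ∀ j, (S j).1 < (S j).2}

/-- The simple graph underlying the multigraph `G(S)`: `a ≠ b` are adjacent iff some pair
of the sequence `S` equals `(a,b)` or `(b,a)`. -/
def graphOf {d m : ℕ} (S : Fin (2*m) → Fin d × Fin d) : SimpleGraph (Fin d) where
  Adj a b := a ≠ b ∧ ∃ j, S j = (a, b) ∨ S j = (b, a)
  symm := ⟨fun _ _ ⟨hab, j, h⟩ => ⟨hab.symm, j, h.symm⟩⟩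
  loopless := ⟨fun _ ⟨h, _⟩ => h rfl⟩

/-- `Ver(G(S))`: the set of integers occurring in the sequence `S`, i.e. the vertices of
`G(S)` (all of which have positive degree). -/
def Ver {d m : ℕ} (S : Fin (2*m) → Fin d × Fin d) : Finset (Fin d) :=
  univ.filter (fun v => ∃ j, (S j).1 = v ∨ (S j).2 = v)

/-- The degree of `v` in the multigraph `G(S)`: the number of pairs `(j,a)` with
`S_{j,a} = v`. -/
def deg {d m : ℕ} (S : Fin (2*m) → Fin d × Fin d) (v : Fin d) : ℕ :=
  (univ.filter (fun j => (S j).1 = v)).card + (univ.filter (fun j => (S j).2 = v)).card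

open scoped Classical in
/-- The number of connected components of the multigraph `G(S)`, i.e. the number of
connected components of the underlying simple graph that meet `Ver(G(S))`. -/
def numComp {d m : ℕ} (S : Fin (2*m) → Fin d × Fin d) : ℕ :=
  ((Ver S).image (fun v => (graphOf S).connectedComponentMk v)).card

/-- `[i] = {1, …, i}`, realized as the first `i` elements of `Fin d`. -/
def seg (d i : ℕ) : Finset (Fin d) := univ.filter (fun v => (v : ℕ) < i)

/-- `W_{Q,t}`: the set of sequences `S` with `Ver(G(S)) = Q`, all degrees of `G(S)`
positive and even, and `G(S)` having exactly `t` connected components. -/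
def W (d m : ℕ) (Q : Finset (Fin d)) (t : ℕ) : Set (Fin (2*m) → Fin d × Fin d) :=
  {S | S ∈ Seqs d m ∧ Ver S = Q ∧ (∀ v ∈ Ver S, 0 < deg S v ∧ Even (deg S v)) ∧
    numComp S = t}

end

/-!
All `2m` pairs of a sequence in `W_{[i],t}` lie in `[i] × [i]`, so `|W_{[i],t}| ≤ i^{4m}`, and
for `F ≤ log m / log log m` this crude count is already good enough. With `n = 4m - 2i`, write
`i^{4m} F^n = (iF)^n · i^i · i^i`. Since `x ≤ exp x`, `(iF/m)^n ≤ exp (n·iF/m) ≤ exp (4iF) ≤ m^s`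
for `s = ⌊i/20⌋ + 1`, because `80 F ≤ log m` once `m ≥ exp (exp 80)`. One factor `i^i` is at most
`e^{2m} i!`, the other at most `2^{2m} m^i`. Finally `t < 0.39 i` gives `s ≤ 2i - 5t`, so the
total power of `m` is at most `4m + i - 5t`.
-/

theorem W_subset_piFinset {d m t : ℕ} (Q : Finset (Fin d)) :
    W d m Q t ⊆ ↑(Fintype.piFinset fun _ : Fin (2 * m) => Q ×ˢ Q) := by
  rintro S ⟨-, hVer, -, -⟩
  rw [Fintype.coe_piFinset]
  intro j _
  have hmem : ∀ v, (∃ k, (S k).1 = v ∨ (S k).2 = v) → v ∈ Q := fun v hv => by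
    rw [← hVer]; exact mem_filter.2 ⟨mem_univ v, hv⟩
  exact mem_product.2 ⟨hmem _ ⟨j, .inl rfl⟩, hmem _ ⟨j, .inr rfl⟩⟩

theorem ncard_W_le {d m t : ℕ} (Q : Finset (Fin d)) : (W d m Q t).ncard ≤ #Q ^ (4 * m) := by
  calc (W d m Q t).ncard
      ≤ (↑(Fintype.piFinset fun _ : Fin (2 * m) => Q ×ˢ Q) : Set _).ncard :=
        Set.ncard_le_ncard (W_subset_piFinset Q) (Finset.finite_toSet _)
    _ = #Q ^ (4 * m) := by
        rw [Set.ncard_coe_finset, Fintype.card_piFinset_const, card_product, ← sq, ← pow_mul]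
        ring_nf

theorem card_seg {d i : ℕ} (hid : i ≤ d) : #(seg d i) = i := by
  rw [seg, Fin.card_filter_val_lt, min_eq_right hid]

theorem pow_le_exp_mul {x : ℝ} (hx : 0 ≤ x) (n : ℕ) : x ^ n ≤ Real.exp (n * x) := by
  rw [Real.exp_nat_mul]
  exact pow_le_pow_left₀ hx (by linarith [Real.add_one_le_exp x]) n

theorem pow_le_pow_add_of_mul_le_mul_log {M y c : ℝ} {n s : ℕ} (hM : 0 < M) (hy : 0 ≤ y)
    (hn : n ≤ c * M) (hy_le : c * y ≤ s * Real.log M) : y ^ n ≤ M ^ (n + s) := by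
  have hratio : (y / M) ^ n ≤ M ^ s :=
    calc (y / M) ^ n ≤ Real.exp (n * (y / M)) := pow_le_exp_mul (by positivity) n
      _ ≤ Real.exp (s * Real.log M) := by
          refine Real.exp_le_exp.2 ?_
          calc (n : ℝ) * (y / M) ≤ c * M * (y / M) := by gcongr
            _ = c * y := by field_simp
            _ ≤ s * Real.log M := hy_le
      _ = M ^ s := by rw [← Real.log_pow, Real.exp_log (by positivity)]
  calc y ^ n = (y / M) ^ n * M ^ n := by rw [div_pow, div_mul_cancel₀ _ (by positivity)]
    _ ≤ M ^ s * M ^ n := by gcongr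
    _ = M ^ (n + s) := by rw [pow_add, mul_comm]

theorem pow_self_le_exp_mul_factorial (n : ℕ) : (n : ℝ) ^ n ≤ Real.exp n * n.factorial := by
  have h := Real.pow_div_factorial_le_exp (x := (n : ℝ)) (Nat.cast_nonneg n) n
  rwa [div_le_iff₀ (by positivity)] at h

theorem pow_two_mul_self_le {i m : ℕ} (him : i ≤ 2 * m) :
    (i : ℝ) ^ (2 * i) ≤ (2 * Real.exp 1) ^ (2 * m) * i.factorial * (m : ℝ) ^ i := by
  have him' : (i : ℝ) ≤ 2 * m := by exact_mod_cast him
  have hfac : (i : ℝ) ^ i ≤ Real.exp 1 ^ (2 * m) * i.factorial :=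
    calc (i : ℝ) ^ i ≤ Real.exp i * i.factorial := pow_self_le_exp_mul_factorial i
      _ ≤ Real.exp 1 ^ (2 * m) * i.factorial := by
          rw [← Real.exp_nat_mul]; gcongr; push_cast; linarith
  have hpow : (i : ℝ) ^ i ≤ 2 ^ (2 * m) * (m : ℝ) ^ i :=
    calc (i : ℝ) ^ i ≤ (2 * m) ^ i := by gcongr
      _ = 2 ^ i * (m : ℝ) ^ i := mul_pow _ _ _
      _ ≤ 2 ^ (2 * m) * (m : ℝ) ^ i := by gcongr; norm_num
  calc (i : ℝ) ^ (2 * i) = (i : ℝ) ^ i * (i : ℝ) ^ i := by ring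
    _ ≤ (Real.exp 1 ^ (2 * m) * i.factorial) * (2 ^ (2 * m) * (m : ℝ) ^ i) := by gcongr
    _ = (2 * Real.exp 1) ^ (2 * m) * i.factorial * (m : ℝ) ^ i := by rw [mul_pow]; ring

theorem pow_mul_pow_le_factorial_mul_pow {m i t : ℕ} {F : ℝ} (hm : 0 < m) (hF : 0 ≤ F)
    (hFm : 80 * F ≤ Real.log m) (him : i ≤ 2 * m) (hti : 100 * t < 39 * i) :
    (i : ℝ) ^ (4 * m) * F ^ (4 * m - 2 * i) ≤
      (2 * Real.exp 1) ^ (2 * m) * i.factorial * (m : ℝ) ^ (4 * m + i - 5 * t) := by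
  set n := 4 * m - 2 * i
  set s := i / 20 + 1
  have hm1 : (1 : ℝ) ≤ m := by exact_mod_cast hm
  have hiF : ((i : ℝ) * F) ^ n ≤ (m : ℝ) ^ (n + s) := by
    refine pow_le_pow_add_of_mul_le_mul_log (c := 4) (by positivity) (by positivity) ?_ ?_
    · exact_mod_cast Nat.sub_le (4 * m) (2 * i)
    · have hi20 : (i : ℝ) ≤ 20 * s := by exact_mod_cast (show i ≤ 20 * s by omega)
      nlinarith
  calc (i : ℝ) ^ (4 * m) * F ^ n = ((i : ℝ) * F) ^ n * (i : ℝ) ^ (2 * i) := by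
        rw [mul_pow, show 4 * m = n + 2 * i by omega, pow_add]; ring
    _ ≤ (m : ℝ) ^ (n + s) * ((2 * Real.exp 1) ^ (2 * m) * i.factorial * (m : ℝ) ^ i) := by
        gcongr
        exact pow_two_mul_self_le him
    _ = (2 * Real.exp 1) ^ (2 * m) * i.factorial * (m : ℝ) ^ (n + s + i) := by ring
    _ ≤ (2 * Real.exp 1) ^ (2 * m) * i.factorial * (m : ℝ) ^ (4 * m + i - 5 * t) :=
        mul_le_mul_of_nonneg_left (pow_le_pow_right₀ hm1 (by omega)) (by positivity)

theorem mul_log_div_log_log_le {c x : ℝ} (hc : 0 < c) (hx : Real.exp (Real.exp c) ≤ x) :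
    c * (Real.log x / Real.log (Real.log x)) ≤ Real.log x := by
  have hlog : Real.exp c ≤ Real.log x := by
    simpa using Real.log_le_log (by positivity) hx
  have hloglog : c ≤ Real.log (Real.log x) := by
    simpa using Real.log_le_log (by positivity) hlog
  have hlog_nonneg : 0 ≤ Real.log x := (Real.exp_pos c).le.trans hlog
  calc c * (Real.log x / Real.log (Real.log x))
      ≤ Real.log (Real.log x) * (Real.log x / Real.log (Real.log x)) := by
        gcongr
        exact div_nonneg hlog_nonneg (by linarith)
    _ = Real.log x := mul_div_cancel₀ _ (by linarith)

/-- (Counting lemma, small `t`.) There are absolute constants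
`υ, CONST ≥ 1` and `m₀ ≥ 1` such that for every integer `m ≥ m₀`, every real
`1 ≤ F ≤ υ·log m/log log m`, every `d ≥ 1` and all integers `i, t` with `1 ≤ i ≤ 2m`,
`i ≤ d`, `1 ≤ t ≤ i/2` and `t < 0.39·i`:
`|W_{[i],t}| ≤ CONST^{2m} · i! · m^{4m+i-5t} · (1/F)^{4m-2i}`. -/
theorem statement11 :
    ∃ (υ CONST : ℝ) (m₀ : ℕ), 1 ≤ υ ∧ 1 ≤ CONST ∧ 0 < m₀ ∧
      ∀ (m : ℕ), m₀ ≤ m →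
      ∀ (F : ℝ), 1 ≤ F → F ≤ υ * Real.log m / Real.log (Real.log m) →
      ∀ (d : ℕ), 0 < d →
      ∀ (i t : ℕ), 1 ≤ i → i ≤ 2*m → i ≤ d →
      1 ≤ t → 2*t ≤ i → (t : ℝ) < 0.39 * (i : ℝ) →
        ((W d m (seg d i) t).ncard : ℝ) ≤
          CONST ^ (2*m) * (i.factorial : ℝ) *
            (m : ℝ) ^ (4*(m : ℤ) + (i : ℤ) - 5*(t : ℤ)) *
            (F⁻¹) ^ (4*(m : ℤ) - 2*(i : ℤ)) := by
  refine ⟨1, 2 * Real.exp 1, ⌈Real.exp (Real.exp 80)⌉₊, le_rfl,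
    by linarith [Real.add_one_le_exp 1], Nat.ceil_pos.2 (by positivity), ?_⟩
  intro m hm F hF hFm d _ i t _ him hid _ _ ht
  have hm_large : Real.exp (Real.exp 80) ≤ m := Nat.ceil_le.1 hm
  have hm_pos : 0 < m := by exact_mod_cast (Real.exp_pos _).trans_le hm_large
  have hF_log : 80 * F ≤ Real.log m := by
    rw [one_mul] at hFm
    nlinarith [mul_log_div_log_log_le (by norm_num) hm_large]
  have hti : 100 * t < 39 * i := by exact_mod_cast (show (100 * t : ℝ) < 39 * i by linarith)
  have hcount : ((W d m (seg d i) t).ncard : ℝ) ≤ (i : ℝ) ^ (4 * m) := by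
    exact_mod_cast card_seg hid ▸ ncard_W_le (m := m) (t := t) (seg d i)
  rw [show 4 * (m : ℤ) + i - 5 * t = ((4 * m + i - 5 * t : ℕ) : ℤ) by omega,
    show 4 * (m : ℤ) - 2 * i = ((4 * m - 2 * i : ℕ) : ℤ) by omega, zpow_natCast, zpow_natCast,
    inv_pow, ← div_eq_mul_inv, le_div_iff₀ (by positivity)]
  calc ((W d m (seg d i) t).ncard : ℝ) * F ^ (4 * m - 2 * i)
      ≤ (i : ℝ) ^ (4 * m) * F ^ (4 * m - 2 * i) :=
        mul_le_mul_of_nonneg_right hcount (by positivity)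
    _ ≤ _ := pow_mul_pow_le_factorial_mul_pow hm_pos (by linarith) hF_log him hti
end

section
/- Let i, t be positive integers with 3t > i and i ≤ d. Then W_{[i],t} ⊆ SPARSE_{3t−i}. -/
open Finset MeasureTheory ProbabilityTheory

noncomputable section

open scoped Classical in
/-- The vertex set of the connected component `c` of the multigraph `G(S)`. -/
def compVer {d m : ℕ} (S : Fin (2*m) → Fin d × Fin d)
    (c : (graphOf S).ConnectedComponent) : Finset (Fin d) :=
  (Ver S).filter (fun v => (graphOf S).connectedComponentMk v = c)

open scoped Classical in
/-- The number of connected components of `G(S)` whose vertex set consists of exactly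
`2` vertices. -/
def numTwoComp {d m : ℕ} (S : Fin (2*m) → Fin d × Fin d) : ℕ :=
  (((Ver S).image (fun v => (graphOf S).connectedComponentMk v)).filter
    (fun c => (compVer S c).card = 2)).card

/-- `SPARSE_u` (for a fixed `i`): the set of sequences `S` with `Ver(G(S)) = [i]`, all
degrees of `G(S)` positive and even, and at least `u` connected components of `G(S)`
having a vertex set of size exactly `2`. -/
def SPARSE (d m i u : ℕ) : Set (Fin (2*m) → Fin d × Fin d) :=
  {S | S ∈ Seqs d m ∧ Ver S = seg d i ∧
    (∀ v ∈ Ver S, 0 < deg S v ∧ Even (deg S v)) ∧ u ≤ numTwoComp S}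

/-! Every edge of `G(S)` joins two distinct vertices, so each of the `t` components has at least
two vertices. If `k` of them have exactly two, the remaining `t - k` have at least three, whence
`2k + 3(t - k) ≤ |[i]| ≤ i`, i.e. `k ≥ 3t - i`. -/

theorem Finset.three_mul_card_sub_sum_le_card_filter_eq_two {ι : Type*} (C : Finset ι)
    (f : ι → ℕ) (hf : ∀ c ∈ C, 2 ≤ f c) :
    3 * #C - ∑ c ∈ C, f c ≤ #(C.filter (fun c => f c = 2)) := by
  have hsplit := C.card_filter_add_card_filter_not (fun c => f c = 2)
  have htwo : ∑ c ∈ C.filter (fun c => f c = 2), f c = 2 * #(C.filter (fun c => f c = 2)) := by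
    rw [sum_congr rfl fun c hc => (mem_filter.mp hc).2, sum_const, smul_eq_mul, mul_comm]
  have hthree :
      3 * #(C.filter (fun c => ¬ f c = 2)) ≤ ∑ c ∈ C.filter (fun c => ¬ f c = 2), f c := by
    rw [mul_comm, ← smul_eq_mul, ← sum_const]
    refine sum_le_sum fun c hc => ?_
    obtain ⟨hcC, hc2⟩ := mem_filter.mp hc
    have := hf c hcC
    omega
  rw [← C.sum_filter_add_sum_filter_not (fun c => f c = 2)]
  omega

theorem card_seg_le (d i : ℕ) : #(seg d i) ≤ i := by
  calc #(seg d i) ≤ #(range i) :=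
        card_le_card_of_injOn (fun v => (v : ℕ)) (fun v hv => by simpa [seg] using hv)
          (fun v _ w _ h => Fin.ext h)
    _ = i := card_range i

section Components

open scoped Classical

variable {d m : ℕ} (S : Fin (2*m) → Fin d × Fin d)

def comps : Finset (graphOf S).ConnectedComponent :=
  (Ver S).image (graphOf S).connectedComponentMk

theorem numComp_eq_card_comps : numComp S = #(comps S) := rfl

theorem numTwoComp_eq_card_filter_comps :
    numTwoComp S = #((comps S).filter (fun c => #(compVer S c) = 2)) := rfl

theorem sum_card_compVer : ∑ c ∈ comps S, #(compVer S c) = #(Ver S) :=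
  (card_eq_sum_card_fiberwise fun _ hv => mem_image_of_mem _ hv).symm

variable {S}

theorem exists_adj_of_mem_Ver (hS : S ∈ Seqs d m) {v : Fin d} (hv : v ∈ Ver S) :
    ∃ w ∈ Ver S, (graphOf S).Adj v w := by
  simp only [Ver, mem_filter, mem_univ, true_and] at hv ⊢
  obtain ⟨j, rfl | rfl⟩ := hv
  · exact ⟨(S j).2, ⟨j, Or.inr rfl⟩, (hS j).ne, j, Or.inl rfl⟩
  · exact ⟨(S j).1, ⟨j, Or.inl rfl⟩, (hS j).ne', j, Or.inr rfl⟩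

theorem two_le_card_compVer (hS : S ∈ Seqs d m) {c} (hc : c ∈ comps S) :
    2 ≤ #(compVer S c) := by
  obtain ⟨v, hv, rfl⟩ := mem_image.mp hc
  obtain ⟨w, hw, hvw⟩ := exists_adj_of_mem_Ver hS hv
  have hsub : {v, w} ⊆ compVer S ((graphOf S).connectedComponentMk v) := by
    intro x hx
    rcases mem_insert.mp hx with rfl | hx
    · exact mem_filter.mpr ⟨hv, rfl⟩
    · rw [mem_singleton.mp hx]
      exact mem_filter.mpr ⟨hw, SimpleGraph.ConnectedComponent.sound hvw.symm.reachable⟩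
  calc 2 = #{v, w} := (card_pair hvw.ne).symm
    _ ≤ _ := card_le_card hsub

end Components

theorem statement13_general (d m i t : ℕ) :
    W d m (seg d i) t ⊆ SPARSE d m i (3*t - i) := by
  rintro S ⟨hSeq, hVer, hdeg, hcomp⟩
  refine ⟨hSeq, hVer, hdeg, ?_⟩
  calc 3 * t - i ≤ 3 * #(comps S) - ∑ c ∈ comps S, #(compVer S c) := by
        rw [← numComp_eq_card_comps, hcomp, sum_card_compVer, hVer]
        have := card_seg_le d i
        omega
    _ ≤ numTwoComp S := by
        rw [numTwoComp_eq_card_filter_comps]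
        exact (comps S).three_mul_card_sub_sum_le_card_filter_eq_two _
          fun c hc => two_le_card_compVer hSeq hc

/-- Let `i, t ≥ 1` with `3t > i` and `i ≤ d`. Then
`W_{[i],t} ⊆ SPARSE_{3t-i}`. -/
theorem statement13 (d m i t : ℕ) (hd : 0 < d) (hm : 0 < m) (hi : 0 < i) (ht : 0 < t)
    (hid : i ≤ d) (hit : i < 3*t) :
    W d m (seg d i) t ⊆ SPARSE d m i (3*t - i) :=
  statement13_general d m i t

end
end
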